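/- The normalized matrix of maximum out-forests J̄ of a weighted digraph Γ is the eigenprojection of its Kirchhoff matrix L at eigenvalue 0: J̄ is idempotent, its range equals ker L, and its kernel equals the range of L. -/

import Mathlib

/-!
Let `W i j` be the total weight of the maximum out-forests in which `i` lies in the tree rooted at
`j`, so that `J̄ = W / Z`. In a maximum out-forest every arc of the digraph entering a root comes
from the root's own tree (otherwise it could be added), so exchanging one arc of a maximum
out-forest yields another one. Two such exchanges are weight-preserving bijections proving
`L W = 0` (re-hang `i` on a neighbour `k` lying in another tree) and `W L = 0` (cut `j` from its
parent and hang the old root of its tree below it).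

Conversely, if `L x = 0` then `x` obeys a maximum principle along reachability, so it is constant
on every basis bicomponent and vanishes identically once it vanishes on all of them. For `v` in a
basis bicomponent, row `v` of `J̄` is a probability vector supported in that bicomponent, hence
`J̄ x - x` is such a vector and `J̄` fixes `ker L`. Together with `L J̄ = J̄ L = 0` and rank–nullity
this makes `J̄` the projection onto `ker L` along `range L`.
-/

open Finset

variable {n : ℕ}

/-- Kirchhoff (Laplacian) matrix of the weighted digraph whose arc `(j, i)`
has weight `a i j` (so `a i j` is the weight with which agent `i` accounts for `j`). -/
noncomputable def kirchhoff (a : Matrix (Fin n) (Fin n) ℝ) : Matrix (Fin n) (Fin n) ℝ :=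
  Matrix.of fun i j => if i = j then ∑ k ∈ Finset.univ.erase i, a i k else -a i j

/-- `F` is a spanning diverging forest (out-forest) of the digraph with arcs
`u → v` present iff `a v u > 0`: every arc of `F` is an arc of the digraph,
every vertex has in-degree at most one in `F`, and `F` has no directed cycles
(equivalently, no infinite directed walk). -/
def IsOutForest (a : Matrix (Fin n) (Fin n) ℝ) (F : Finset (Fin n × Fin n)) : Prop :=
  (∀ e ∈ F, 0 < a e.2 e.1) ∧
  (∀ u u' v : Fin n, (u, v) ∈ F → (u', v) ∈ F → u = u') ∧
  ¬ ∃ f : ℕ → Fin n, ∀ k, (f k, f (k + 1)) ∈ F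

/-- Number of arcs of a maximum out-forest. -/
noncomputable def maxForestSize (a : Matrix (Fin n) (Fin n) ℝ) : ℕ :=
  sSup {k | ∃ F, IsOutForest a F ∧ F.card = k}

/-- The out-forest dimension: the number of trees in any maximum out-forest. -/
noncomputable def outForestDim (a : Matrix (Fin n) (Fin n) ℝ) : ℕ :=
  n - maxForestSize a

open Classical in
/-- The set of maximum out-forests. -/
noncomputable def maxForests (a : Matrix (Fin n) (Fin n) ℝ) :
    Finset (Finset (Fin n × Fin n)) :=
  Finset.univ.filter fun F => IsOutForest a F ∧ F.card = maxForestSize a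

/-- The weight of a forest: the product of its arc weights. -/
def forestWeight (a : Matrix (Fin n) (Fin n) ℝ) (F : Finset (Fin n × Fin n)) : ℝ :=
  ∏ e ∈ F, a e.2 e.1

/-- In forest `F`, vertex `i` belongs to the tree diverging from (rooted at) `j`. -/
def InTreeRootedAt (F : Finset (Fin n × Fin n)) (j i : Fin n) : Prop :=
  (∀ u, (u, j) ∉ F) ∧ Relation.ReflTransGen (fun x y => (x, y) ∈ F) j i

open Classical in
/-- The normalized matrix of maximum out-forests. -/
noncomputable def barJ (a : Matrix (Fin n) (Fin n) ℝ) : Matrix (Fin n) (Fin n) ℝ :=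
  Matrix.of fun i j =>
    (∑ F ∈ (maxForests a).filter (fun F => InTreeRootedAt F j i), forestWeight a F) /
    (∑ F ∈ maxForests a, forestWeight a F)

/-- Reachability by directed paths (arc `u → v` present iff `a v u > 0`). -/
def Reach (a : Matrix (Fin n) (Fin n) ℝ) (u v : Fin n) : Prop :=
  Relation.ReflTransGen (fun x y => 0 < a y x) u v

/-- The strong component (bicomponent) of vertex `v`. -/
def strongClass (a : Matrix (Fin n) (Fin n) ℝ) (v : Fin n) : Set (Fin n) :=
  {u | Reach a u v ∧ Reach a v u}

/-- The set of strong components. -/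
def strongClasses (a : Matrix (Fin n) (Fin n) ℝ) : Set (Set (Fin n)) :=
  {S | ∃ v, S = strongClass a v}

/-- Basis bicomponents: strong components with no arcs entering from outside. -/
def basisClasses (a : Matrix (Fin n) (Fin n) ℝ) : Set (Set (Fin n)) :=
  {S | (∃ v, S = strongClass a v) ∧ ∀ u v, u ∉ S → v ∈ S → ¬ 0 < a v u}

/-- Weak reachability (underlying undirected graph). -/
def WeakReach (a : Matrix (Fin n) (Fin n) ℝ) (u v : Fin n) : Prop :=
  Relation.ReflTransGen (fun x y => 0 < a y x ∨ 0 < a x y) u v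

/-- The set of weak components. -/
def weakClasses (a : Matrix (Fin n) (Fin n) ℝ) : Set (Set (Fin n)) :=
  {S | ∃ v, S = {u | WeakReach a u v}}

open Relation

theorem Finite.wellFounded_iff_forall_not_transGen {α : Type*} [Finite α]
    {r : α → α → Prop} :
    WellFounded r ↔ ∀ x, ¬ TransGen r x x := by
  refine ⟨fun h => h.transGen.irrefl.irrefl, fun h => ?_⟩
  have : IsTrans α (TransGen r) := ⟨fun _ _ _ => TransGen.trans⟩
  have : Std.Irrefl (TransGen r) := ⟨h⟩
  exact (Finite.wellFounded_of_trans_of_irrefl (TransGen r)).mono fun _ _ => TransGen.single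

theorem Finite.not_exists_walk_iff_forall_not_transGen {α : Type*} [Finite α]
    {r : α → α → Prop} :
    (¬ ∃ f : ℕ → α, ∀ k, r (f k) (f (k + 1))) ↔ ∀ x, ¬ TransGen r x x := by
  have := (wellFounded_iff_isEmpty_descending_chain (r := Function.swap r)).symm.trans
    Finite.wellFounded_iff_forall_not_transGen
  simpa [isEmpty_subtype, transGen_swap] using this

theorem Matrix.mul_self_eq_and_range_eq_ker_and_ker_eq_range {ι K : Type*} [Fintype ι]
    [DecidableEq ι] [Field K] {P L : Matrix ι ι K} (hLP : L * P = 0) (hPL : P * L = 0)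
    (hfix : ∀ x, L.mulVec x = 0 → P.mulVec x = x) :
    P * P = P ∧ LinearMap.range P.mulVecLin = LinearMap.ker L.mulVecLin ∧
      LinearMap.ker P.mulVecLin = LinearMap.range L.mulVecLin := by
  have hLPx : ∀ x, L.mulVec (P.mulVec x) = 0 := fun x => by
    rw [Matrix.mulVec_mulVec, hLP, Matrix.zero_mulVec]
  have hrange : LinearMap.range P.mulVecLin = LinearMap.ker L.mulVecLin := by
    refine le_antisymm ?_ fun x hx => ⟨x, hfix x hx⟩
    rintro _ ⟨x, rfl⟩
    exact hLPx x
  refine ⟨Matrix.ext_of_mulVec_single fun i => ?_, hrange, ?_⟩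
  · rw [← Matrix.mulVec_mulVec, hfix _ (hLPx _)]
  · have hle : LinearMap.range L.mulVecLin ≤ LinearMap.ker P.mulVecLin := by
      rintro _ ⟨x, rfl⟩
      simp [Matrix.mulVec_mulVec, hPL]
    have hP := LinearMap.finrank_range_add_finrank_ker P.mulVecLin
    have hL := LinearMap.finrank_range_add_finrank_ker L.mulVecLin
    rw [hrange] at hP
    exact (Submodule.eq_of_le_of_finrank_eq hle (by omega)).symm

namespace OutForest

variable {α : Type*} {F E : Finset (α × α)} {j m m' p u v x y z : α}

def IsAncestor (F : Finset (α × α)) (x y : α) : Prop :=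
  ReflTransGen (fun u v => (u, v) ∈ F) x y

def IsRoot (F : Finset (α × α)) (v : α) : Prop :=
  ∀ u, (u, v) ∉ F

structure IsForest (F : Finset (α × α)) : Prop where
  indeg_le_one : ∀ ⦃u u' v⦄, (u, v) ∈ F → (u', v) ∈ F → u = u'
  acyclic : ∀ ⦃u v⦄, (u, v) ∈ F → ¬ IsAncestor F v u

open Classical in
noncomputable def parent (F : Finset (α × α)) (v : α) : α :=
  if h : ∃ u, (u, v) ∈ F then h.choose else v

namespace IsAncestor

lemma refl : IsAncestor F x x := ReflTransGen.refl

lemma tail (h : IsAncestor F x y) (hyz : (y, z) ∈ F) : IsAncestor F x z := ReflTransGen.tail h hyz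

lemma head (hxy : (x, y) ∈ F) (h : IsAncestor F y z) : IsAncestor F x z := ReflTransGen.head hxy h

lemma trans (hxy : IsAncestor F x y) (hyz : IsAncestor F y z) : IsAncestor F x z :=
  ReflTransGen.trans hxy hyz

lemma mono (hFE : F ⊆ E) (h : IsAncestor F x y) : IsAncestor E x y :=
  ReflTransGen.mono (fun _ _ hab => hFE hab) _ _ h

lemma of_insert [DecidableEq α] (h : IsAncestor (insert (u, v) E) x y) :
    IsAncestor E x y ∨ (IsAncestor E x u ∧ IsAncestor E v y) := by
  induction h with
  | refl => exact .inl .refl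
  | tail _ hbc ih =>
    rcases Finset.mem_insert.mp hbc with hbc | hbc
    · obtain ⟨rfl, rfl⟩ := Prod.mk.inj hbc
      exact .inr ⟨ih.elim id And.left, .refl⟩
    · exact ih.imp (·.tail hbc) (And.imp_right (·.tail hbc))

lemma exists_mem_of_ne (h : IsAncestor F x y) (hne : y ≠ x) :
    ∃ z, (x, z) ∈ F ∧ IsAncestor F z y :=
  TransGen.head'_iff.mp ((reflTransGen_iff_eq_or_transGen.mp h).resolve_left hne)

lemma erase_or [DecidableEq α] (h : IsAncestor F x y) :
    IsAncestor (F.erase (u, v)) x y ∨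
      (IsAncestor (F.erase (u, v)) x u ∧ IsAncestor (F.erase (u, v)) v y) :=
  (h.mono (Finset.insert_erase_subset _ F)).of_insert

end IsAncestor

lemma IsRoot.eq_of_isAncestor (hv : IsRoot F v) (h : IsAncestor F u v) : u = v := by
  rcases ReflTransGen.cases_tail h with rfl | ⟨c, _, hc⟩
  · rfl
  · exact absurd hc (hv c)

lemma IsRoot.erase [DecidableEq α] (hv : IsRoot F v) (e : α × α) : IsRoot (F.erase e) v :=
  fun u hu => hv u (Finset.mem_of_mem_erase hu)

lemma IsRoot.insert [DecidableEq α] (hv : IsRoot F v) (hne : y ≠ v) :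
    IsRoot (insert (x, y) F) v := by
  intro u hu
  rcases Finset.mem_insert.mp hu with h | h
  · exact hne (Prod.mk.inj h).2.symm
  · exact hv u h

lemma parent_mem (h : ¬ IsRoot F v) : (parent F v, v) ∈ F := by
  have h' : ∃ u, (u, v) ∈ F := by simpa [IsRoot] using h
  rw [parent, dif_pos h']
  exact h'.choose_spec

namespace IsForest

lemma subset (hF : IsForest F) (hEF : E ⊆ F) : IsForest E where
  indeg_le_one _ _ _ h h' := hF.indeg_le_one (hEF h) (hEF h')
  acyclic _ _ h h' := hF.acyclic (hEF h) (h'.mono hEF)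

lemma insert [DecidableEq α] (hF : IsForest F) (hv : IsRoot F v) (hvu : ¬ IsAncestor F v u) :
    IsForest (insert (u, v) F) where
  indeg_le_one w w' z h h' := by
    rcases Finset.mem_insert.mp h with h | h <;> rcases Finset.mem_insert.mp h' with h' | h'
    · exact (Prod.mk.inj h).1.trans (Prod.mk.inj h').1.symm
    · exact absurd ((Prod.mk.inj h).2 ▸ h') (hv w')
    · exact absurd ((Prod.mk.inj h').2 ▸ h) (hv w)
    · exact hF.indeg_le_one h h'
  acyclic p q hpq hqp := by
    rcases Finset.mem_insert.mp hpq with h | h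
    · obtain ⟨rfl, rfl⟩ := Prod.mk.inj h
      exact hqp.of_insert.elim hvu (fun h' => hvu h'.1)
    · rcases hqp.of_insert with h' | ⟨h₁, h₂⟩
      · exact hF.acyclic h h'
      · exact hvu ((h₂.tail h).trans h₁)

lemma ne_of_mem (hF : IsForest F) (h : (u, v) ∈ F) : u ≠ v := by
  rintro rfl
  exact hF.acyclic h .refl

lemma parent_eq (hF : IsForest F) (h : (u, v) ∈ F) : parent F v = u :=
  hF.indeg_le_one (parent_mem fun hv => hv u h) h

lemma isRoot_erase [DecidableEq α] (hF : IsForest F) (h : (u, v) ∈ F) :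
    IsRoot (F.erase (u, v)) v := by
  intro w hw
  obtain ⟨hne, hw⟩ := Finset.mem_erase.mp hw
  exact hne (by rw [hF.indeg_le_one hw h])

lemma isAncestor_of_mem (hF : IsForest F) (hp : (p, v) ∈ F) (h : IsAncestor F x v)
    (hne : x ≠ v) :
    IsAncestor F x p := by
  rcases ReflTransGen.cases_tail h with rfl | ⟨c, hxc, hc⟩
  · exact absurd rfl hne
  · rwa [hF.indeg_le_one hc hp] at hxc

lemma isAncestor_total (hF : IsForest F) (hx : IsAncestor F x z) (hy : IsAncestor F y z) :
    IsAncestor F x y ∨ IsAncestor F y x := by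
  induction hx with
  | refl => exact .inr hy
  | @tail b c hxb hbc ih =>
    rcases ReflTransGen.cases_tail hy with rfl | ⟨d, hyd, hdc⟩
    · exact .inl (hxb.tail hbc)
    · exact ih (hF.indeg_le_one hdc hbc ▸ hyd)

lemma eq_of_isRoot (hF : IsForest F) (hx : IsRoot F x) (hy : IsRoot F y)
    (hxz : IsAncestor F x z) (hyz : IsAncestor F y z) : x = y := by
  rcases hF.isAncestor_total hxz hyz with h | h
  · exact hy.eq_of_isAncestor h
  · exact (hx.eq_of_isAncestor h).symm

lemma eq_of_mem_of_mem (hF : IsForest F) (hm : (j, m) ∈ F) (hm' : (j, m') ∈ F)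
    (hmz : IsAncestor F m z) (hm'z : IsAncestor F m' z) : m = m' := by
  have key : ∀ {m m'}, (j, m) ∈ F → (j, m') ∈ F → IsAncestor F m m' → m = m' := by
    intro m m' hm hm' h
    by_contra hne
    exact hF.acyclic hm (hF.isAncestor_of_mem hm' h hne)
  rcases hF.isAncestor_total hmz hm'z with h | h
  · exact key hm hm' h
  · exact (key hm' hm h).symm

lemma exists_isRoot_isAncestor [Finite α] (hF : IsForest F) (x : α) :
    ∃ r, IsRoot F r ∧ IsAncestor F r x := by
  have hwf : WellFounded (fun u v => (u, v) ∈ F) :=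
    Finite.wellFounded_iff_forall_not_transGen.mpr fun y hy =>
      let ⟨b, hyb, hby⟩ := TransGen.tail'_iff.mp hy
      hF.acyclic hby hyb
  obtain ⟨r, hr, hmin⟩ := hwf.has_min {r | IsAncestor F r x} ⟨x, .refl⟩
  exact ⟨r, fun u hu => hmin u (IsAncestor.head hu hr) hu, hr⟩

end IsForest

end OutForest

open OutForest

section MaxForests

variable {a : Matrix (Fin n) (Fin n) ℝ} {F : Finset (Fin n × Fin n)} {i j k p q r v x y : Fin n}

lemma isOutForest_iff : IsOutForest a F ↔ (∀ e ∈ F, 0 < a e.2 e.1) ∧ IsForest F := by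
  rw [IsOutForest, Finite.not_exists_walk_iff_forall_not_transGen (r := fun u v => (u, v) ∈ F)]
  refine and_congr_right fun _ => ⟨fun ⟨hindeg, hcyc⟩ => ?_, fun hF => ?_⟩
  · exact ⟨fun u u' v => hindeg u u' v, fun u v huv hvu => hcyc v (TransGen.tail' hvu huv)⟩
  · refine ⟨fun u u' v => @hF.indeg_le_one u u' v, fun x hx => ?_⟩
    obtain ⟨b, hxb, hbx⟩ := TransGen.tail'_iff.mp hx
    exact hF.acyclic hbx hxb

lemma card_le_maxForestSize (h : IsOutForest a F) : F.card ≤ maxForestSize a := by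
  refine le_csSup ⟨Fintype.card (Fin n × Fin n), ?_⟩ ⟨F, h, rfl⟩
  rintro _ ⟨G, _, rfl⟩
  exact G.card_le_univ

open Classical in
lemma mem_maxForests : F ∈ maxForests a ↔ IsOutForest a F ∧ F.card = maxForestSize a := by
  simp [maxForests]

lemma maxForests_nonempty (a : Matrix (Fin n) (Fin n) ℝ) : (maxForests a).Nonempty := by
  have hempty : IsOutForest a ∅ := isOutForest_iff.mpr
    ⟨by simp, ⟨by simp, fun _ _ h => absurd h (Finset.notMem_empty _)⟩⟩
  obtain ⟨F, hF, hcard⟩ : maxForestSize a ∈ {k | ∃ F, IsOutForest a F ∧ F.card = k} :=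
    Nat.sSup_mem ⟨0, ∅, hempty, rfl⟩
      ⟨Fintype.card (Fin n × Fin n), by rintro _ ⟨G, _, rfl⟩; exact G.card_le_univ⟩
  exact ⟨F, mem_maxForests.mpr ⟨hF, hcard⟩⟩

lemma pos_of_mem_maxForests (hF : F ∈ maxForests a) {u v : Fin n} (h : (u, v) ∈ F) :
    0 < a v u :=
  (isOutForest_iff.mp (mem_maxForests.mp hF).1).1 (u, v) h

lemma isForest_of_mem_maxForests (hF : F ∈ maxForests a) : IsForest F :=
  (isOutForest_iff.mp (mem_maxForests.mp hF).1).2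

lemma forestWeight_pos (hF : F ∈ maxForests a) : 0 < forestWeight a F :=
  Finset.prod_pos fun _ he => pos_of_mem_maxForests hF he

lemma sum_forestWeight_maxForests_pos (a : Matrix (Fin n) (Fin n) ℝ) :
    0 < ∑ F ∈ maxForests a, forestWeight a F :=
  Finset.sum_pos (fun _ hF => forestWeight_pos hF) (maxForests_nonempty a)

/-- Maximality: otherwise the arc `u → v` could be added to `F`. -/
lemma isAncestor_of_isRoot_of_pos (hF : F ∈ maxForests a) (hv : IsRoot F v) {u : Fin n}
    (huv : 0 < a v u) : IsAncestor F v u := by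
  by_contra h
  obtain ⟨-, hcard⟩ := mem_maxForests.mp hF
  have hG : IsOutForest a (insert (u, v) F) := by
    refine isOutForest_iff.mpr ⟨fun _ he => ?_, (isForest_of_mem_maxForests hF).insert hv h⟩
    rcases Finset.mem_insert.mp he with rfl | he
    · exact huv
    · exact pos_of_mem_maxForests hF he
  have := card_le_maxForestSize hG
  rw [Finset.card_insert_of_notMem (hv u)] at this
  omega

lemma insert_erase_mem_maxForests (hF : F ∈ maxForests a) {e : Fin n × Fin n} (he : e ∈ F)
    (hy : IsRoot (F.erase e) y) (hyq : 0 < a y q) (hanc : ¬ IsAncestor (F.erase e) y q) :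
    insert (q, y) (F.erase e) ∈ maxForests a := by
  have hE : IsForest (F.erase e) := (isForest_of_mem_maxForests hF).subset (Finset.erase_subset _ _)
  refine mem_maxForests.mpr ⟨isOutForest_iff.mpr ⟨fun e' he' => ?_, hE.insert hy hanc⟩, ?_⟩
  · rcases Finset.mem_insert.mp he' with rfl | he'
    · exact hyq
    · exact pos_of_mem_maxForests hF (Finset.mem_of_mem_erase he')
  · rw [Finset.card_insert_of_notMem (hy q), Finset.card_erase_of_mem he,
      ← (mem_maxForests.mp hF).2]
    have := Finset.card_pos.mpr ⟨e, he⟩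
    omega

lemma forestWeight_insert_erase_mul (he : (p, x) ∈ F) (hq : (q, y) ∉ F.erase (p, x)) :
    forestWeight a (insert (q, y) (F.erase (p, x))) * a x p = forestWeight a F * a y q := by
  rw [forestWeight, forestWeight, Finset.prod_insert hq, ← Finset.mul_prod_erase F _ he]
  ring

lemma OutForest.IsForest.inTreeRootedAt_iff (hF : IsForest F) (h : InTreeRootedAt F r i) :
    InTreeRootedAt F j i ↔ j = r :=
  ⟨fun h' => hF.eq_of_isRoot h'.1 h.1 h'.2 h.2, fun h' => h' ▸ h⟩

lemma OutForest.IsForest.existsUnique_inTreeRootedAt (hF : IsForest F) (i : Fin n) :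
    ∃! j, InTreeRootedAt F j i :=
  let ⟨r, hr⟩ := hF.exists_isRoot_isAncestor i
  ⟨r, hr, fun _ h => (hF.inTreeRootedAt_iff hr).mp h⟩

lemma OutForest.IsForest.inTreeRootedAt_iff_of_isAncestor (hF : IsForest F) (h : IsAncestor F x y) :
    InTreeRootedAt F j x ↔ InTreeRootedAt F j y := by
  obtain ⟨r, hr, -⟩ := hF.existsUnique_inTreeRootedAt x
  have hry : InTreeRootedAt F r y := ⟨hr.1, hr.2.trans h⟩
  rw [hF.inTreeRootedAt_iff hr, hF.inTreeRootedAt_iff hry]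

end MaxForests

section Rehang

variable {a : Matrix (Fin n) (Fin n) ℝ} {F : Finset (Fin n × Fin n)} {i j k : Fin n}

noncomputable def rehang (F : Finset (Fin n × Fin n)) (v w : Fin n) : Finset (Fin n × Fin n) :=
  insert (w, v) (F.erase (parent F v, v))

lemma parent_mem_of_not_isAncestor (hF : F ∈ maxForests a) (hak : 0 < a i k)
    (hik : ¬ IsAncestor F i k) : (parent F i, i) ∈ F :=
  parent_mem fun h => hik (isAncestor_of_isRoot_of_pos hF h hak)

lemma rehang_mem_maxForests (hF : F ∈ maxForests a) (hak : 0 < a i k)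
    (hik : ¬ IsAncestor F i k) : rehang F i k ∈ maxForests a :=
  have hp := parent_mem_of_not_isAncestor hF hak hik
  insert_erase_mem_maxForests hF hp ((isForest_of_mem_maxForests hF).isRoot_erase hp) hak
    fun h => hik (h.mono (Finset.erase_subset _ _))

lemma parent_rehang (hF : F ∈ maxForests a) (hak : 0 < a i k) (hik : ¬ IsAncestor F i k) :
    parent (rehang F i k) i = k :=
  (isForest_of_mem_maxForests (rehang_mem_maxForests hF hak hik)).parent_eq
    (Finset.mem_insert_self _ _)

lemma rehang_rehang (hF : F ∈ maxForests a) (hak : 0 < a i k) (hik : ¬ IsAncestor F i k) :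
    rehang (rehang F i k) i (parent F i) = F := by
  have hp := parent_mem_of_not_isAncestor hF hak hik
  rw [rehang, parent_rehang hF hak hik, rehang,
    Finset.erase_insert ((isForest_of_mem_maxForests hF).isRoot_erase hp k), Finset.insert_erase hp]

lemma forestWeight_rehang_mul (hF : F ∈ maxForests a) (hak : 0 < a i k)
    (hik : ¬ IsAncestor F i k) :
    forestWeight a (rehang F i k) * a i (parent F i) = forestWeight a F * a i k :=
  have hp := parent_mem_of_not_isAncestor hF hak hik
  forestWeight_insert_erase_mul hp ((isForest_of_mem_maxForests hF).isRoot_erase hp k)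

lemma inTreeRootedAt_rehang_iff (hF : F ∈ maxForests a) (hak : 0 < a i k)
    (hik : ¬ IsAncestor F i k) :
    InTreeRootedAt (rehang F i k) j i ↔ InTreeRootedAt F j k := by
  have hFor := isForest_of_mem_maxForests hF
  have hp := parent_mem_of_not_isAncestor hF hak hik
  obtain ⟨r, hr, -⟩ := hFor.existsUnique_inTreeRootedAt k
  have hrk : IsAncestor (F.erase (parent F i, i)) r k :=
    (IsAncestor.erase_or hr.2).resolve_right fun h => hik (h.2.mono (Finset.erase_subset _ _))
  have hri : InTreeRootedAt (rehang F i k) r i :=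
    ⟨(IsRoot.erase hr.1 _).insert fun h => hr.1 _ (h ▸ hp),
      (hrk.mono (Finset.subset_insert _ _)).tail (Finset.mem_insert_self _ _)⟩
  rw [(isForest_of_mem_maxForests (rehang_mem_maxForests hF hak hik)).inTreeRootedAt_iff hri,
    hFor.inTreeRootedAt_iff hr]

lemma inTreeRootedAt_rehang_parent_iff (hF : F ∈ maxForests a) (hak : 0 < a i k)
    (hik : ¬ IsAncestor F i k) :
    InTreeRootedAt (rehang F i k) j (parent F i) ↔ InTreeRootedAt F j i := by
  have hFor := isForest_of_mem_maxForests hF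
  have hp := parent_mem_of_not_isAncestor hF hak hik
  obtain ⟨r, hr, -⟩ := hFor.existsUnique_inTreeRootedAt i
  have hri : r ≠ i := fun h => hr.1 _ (h ▸ hp)
  have hrp : IsAncestor (F.erase (parent F i, i)) r (parent F i) :=
    (hFor.isAncestor_of_mem hp hr.2 hri).erase_or.elim id And.left
  have hrp' : InTreeRootedAt (rehang F i k) r (parent F i) :=
    ⟨(IsRoot.erase hr.1 _).insert hri.symm, hrp.mono (Finset.subset_insert _ _)⟩
  rw [(isForest_of_mem_maxForests (rehang_mem_maxForests hF hak hik)).inTreeRootedAt_iff hrp',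
    hFor.inTreeRootedAt_iff hr]

end Rehang

section KirchhoffMulForest

variable {a : Matrix (Fin n) (Fin n) ℝ}

open Classical in
/-- The sign-reversing involution `(k, F) ↦ (parent F i, rehang F i k)` on the pairs where `i` and
`k` lie in different trees of `F`, exactly one of them rooted at `j`. -/
lemma sum_mul_sub_inTreeRootedAt_eq_zero (hnn : ∀ i j, 0 ≤ a i j) (i j : Fin n) :
    ∑ x ∈ (Finset.univ.erase i) ×ˢ maxForests a, a i x.1 * forestWeight a x.2 *
      ((if InTreeRootedAt x.2 j i then 1 else 0) - (if InTreeRootedAt x.2 j x.1 then 1 else 0)) =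
      0 := by
  let Active (x : Fin n × Finset (Fin n × Fin n)) : Prop :=
    0 < a i x.1 ∧ ¬ (InTreeRootedAt x.2 j i ↔ InTreeRootedAt x.2 j x.1)
  rw [← Finset.sum_filter_of_ne (p := Active) fun x _ hne =>
    ⟨(hnn i x.1).lt_of_ne fun h => hne (by simp [← h]), fun hiff => hne (by simp [hiff])⟩]
  have hmem : ∀ x ∈ ((Finset.univ.erase i) ×ˢ maxForests a).filter Active,
      x.2 ∈ maxForests a ∧ 0 < a i x.1 ∧ ¬ IsAncestor x.2 i x.1 := fun x hx => by
    obtain ⟨hx, hact⟩ := Finset.mem_filter.mp hx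
    have hF := (Finset.mem_product.mp hx).2
    exact ⟨hF, hact.1, fun h =>
      hact.2 ((isForest_of_mem_maxForests hF).inTreeRootedAt_iff_of_isAncestor h)⟩
  refine Finset.sum_involution (fun x _ => (parent x.2 i, rehang x.2 i x.1)) ?_ ?_ ?_ ?_
  · rintro ⟨k, F⟩ hx
    obtain ⟨hF, hak, hik⟩ := hmem _ hx
    simp only [inTreeRootedAt_rehang_iff hF hak hik, inTreeRootedAt_rehang_parent_iff hF hak hik]
    linear_combination ((if InTreeRootedAt F j k then (1 : ℝ) else 0) -
      (if InTreeRootedAt F j i then 1 else 0)) * forestWeight_rehang_mul hF hak hik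
  · rintro ⟨k, F⟩ hx - h
    obtain ⟨hF, hak, hik⟩ := hmem _ hx
    have hki := (Prod.mk.inj h).1 ▸ parent_mem_of_not_isAncestor hF hak hik
    have hFf := isForest_of_mem_maxForests hF
    exact (Finset.mem_filter.mp hx).2.2
      (hFf.inTreeRootedAt_iff_of_isAncestor (IsAncestor.refl.tail hki)).symm
  · rintro ⟨k, F⟩ hx
    obtain ⟨hF, hak, hik⟩ := hmem _ hx
    have hp := parent_mem_of_not_isAncestor hF hak hik
    refine Finset.mem_filter.mpr ⟨Finset.mem_product.mpr ⟨Finset.mem_erase.mpr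
      ⟨(isForest_of_mem_maxForests hF).ne_of_mem hp, Finset.mem_univ _⟩,
        rehang_mem_maxForests hF hak hik⟩, pos_of_mem_maxForests hF hp, ?_⟩
    simp only [inTreeRootedAt_rehang_iff hF hak hik, inTreeRootedAt_rehang_parent_iff hF hak hik]
    exact fun h => (Finset.mem_filter.mp hx).2.2 h.symm
  · rintro ⟨k, F⟩ hx
    obtain ⟨hF, hak, hik⟩ := hmem _ hx
    simp only [parent_rehang hF hak hik, rehang_rehang hF hak hik]

end KirchhoffMulForest

section Reroot

variable {a : Matrix (Fin n) (Fin n) ℝ} {F G : Finset (Fin n × Fin n)} {i j m : Fin n}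

noncomputable def reroot (F : Finset (Fin n × Fin n)) (v w : Fin n) : Finset (Fin n × Fin n) :=
  insert (v, w) (F.erase (parent F v, v))

lemma parent_mem_of_isRoot (hF : F ∈ maxForests a) (hm : IsRoot F m) (hmj : 0 < a m j)
    (hne : m ≠ j) : (parent F j, j) ∈ F :=
  parent_mem fun hj => hne (hj.eq_of_isAncestor (isAncestor_of_isRoot_of_pos hF hm hmj))

lemma reroot_mem_maxForests (hF : F ∈ maxForests a) (hm : IsRoot F m) (hmj : 0 < a m j)
    (hne : m ≠ j) : reroot F j m ∈ maxForests a := by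
  have hp := parent_mem_of_isRoot hF hm hmj hne
  exact insert_erase_mem_maxForests hF hp (hm.erase _) hmj fun h =>
    hne (((isForest_of_mem_maxForests hF).isRoot_erase hp).eq_of_isAncestor h)

lemma insert_erase_reroot (hF : F ∈ maxForests a) (hm : IsRoot F m) (hmj : 0 < a m j)
    (hne : m ≠ j) : insert (parent F j, j) ((reroot F j m).erase (j, m)) = F := by
  rw [reroot, Finset.erase_insert fun h => hm.erase _ j h,
    Finset.insert_erase (parent_mem_of_isRoot hF hm hmj hne)]

lemma forestWeight_reroot_mul (hF : F ∈ maxForests a) (hm : IsRoot F m) (hmj : 0 < a m j)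
    (hne : m ≠ j) : forestWeight a (reroot F j m) * a j (parent F j) = forestWeight a F * a m j :=
  forestWeight_insert_erase_mul (parent_mem_of_isRoot hF hm hmj hne) (hm.erase _ j)

lemma isAncestor_reroot_parent (hF : F ∈ maxForests a) (hm : IsRoot F m) (hmj : 0 < a m j)
    (hne : m ≠ j) : IsAncestor (reroot F j m) m (parent F j) := by
  have hp := parent_mem_of_isRoot hF hm hmj hne
  have h := (isForest_of_mem_maxForests hF).isAncestor_of_mem hp
    (isAncestor_of_isRoot_of_pos hF hm hmj) hne
  exact ((IsAncestor.erase_or h).elim id And.left).mono (Finset.subset_insert _ _)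

lemma inTreeRootedAt_reroot (hF : F ∈ maxForests a) (hm : IsRoot F m) (hmj : 0 < a m j)
    (hne : m ≠ j) (hi : IsAncestor F m i) : InTreeRootedAt (reroot F j m) j i := by
  have hp := parent_mem_of_isRoot hF hm hmj hne
  refine ⟨((isForest_of_mem_maxForests hF).isRoot_erase hp).insert hne, ?_⟩
  rcases IsAncestor.erase_or (u := parent F j) (v := j) hi with h | ⟨-, h⟩
  · exact (h.mono (Finset.subset_insert _ _)).head (Finset.mem_insert_self _ _)
  · exact h.mono (Finset.subset_insert _ _)

lemma eq_of_reroot_eq {F' : Finset (Fin n × Fin n)} {m' : Fin n} (hF : F ∈ maxForests a)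
    (hm : IsRoot F m) (hmj : 0 < a m j) (hne : m ≠ j) (hF' : F' ∈ maxForests a)
    (hm' : IsRoot F' m') (hm'j : 0 < a m' j) (hne' : m' ≠ j) (hp : parent F j = parent F' j)
    (h : reroot F j m = reroot F' j m') : m = m' ∧ F = F' := by
  have hmm' : m = m' :=
    (isForest_of_mem_maxForests (reroot_mem_maxForests hF hm hmj hne)).eq_of_mem_of_mem
      (Finset.mem_insert_self _ _) (h ▸ Finset.mem_insert_self _ _)
      (isAncestor_reroot_parent hF hm hmj hne)
      (hp ▸ h ▸ isAncestor_reroot_parent hF' hm' hm'j hne')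
  subst hmm'
  refine ⟨rfl, ?_⟩
  rw [← insert_erase_reroot hF hm hmj hne, ← insert_erase_reroot hF' hm' hm'j hne', h, hp]

/-- Undoing `reroot`: `m` is the child of `j` on the path to `K`, and `F` hangs `j` below `K`. -/
lemma exists_reroot_eq {K : Fin n} (hG : G ∈ maxForests a) (hj : IsRoot G j) (hjK : 0 < a j K)
    (hKj : K ≠ j) (hi : IsAncestor G j i) :
    ∃ m F, F ∈ maxForests a ∧ IsRoot F m ∧ 0 < a m j ∧ m ≠ j ∧ IsAncestor F m i ∧
      parent F j = K ∧ reroot F j m = G := by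
  have hGf := isForest_of_mem_maxForests hG
  obtain ⟨m, hjm, hmK⟩ := (isAncestor_of_isRoot_of_pos hG hj hjK).exists_mem_of_ne hKj
  have hmK' : IsAncestor (G.erase (j, m)) m K :=
    (IsAncestor.erase_or (F := G) hmK).elim id And.right
  have hjK' : ¬ IsAncestor (G.erase (j, m)) j K := by
    intro h
    obtain ⟨m', hjm', hm'K⟩ := h.exists_mem_of_ne hKj
    have hm' := Finset.mem_erase.mp hjm'
    exact hm'.1 (by rw [hGf.eq_of_mem_of_mem hm'.2 hjm
      ((show IsAncestor _ m' K from hm'K).mono (Finset.erase_subset _ _)) hmK])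
  have hF := insert_erase_mem_maxForests hG hjm (hj.erase _) hjK hjK'
  have hmj := hGf.ne_of_mem hjm
  have hFf := isForest_of_mem_maxForests hF
  refine ⟨m, _, hF, (hGf.isRoot_erase hjm).insert hmj, pos_of_mem_maxForests hG hjm,
    hmj.symm, ?_, hFf.parent_eq (Finset.mem_insert_self _ _), ?_⟩
  · have hmj' : IsAncestor (insert (K, j) (G.erase (j, m))) m j :=
      (hmK'.mono (Finset.subset_insert _ _)).tail (Finset.mem_insert_self _ _)
    rcases IsAncestor.erase_or (u := j) (v := m) hi with h | ⟨-, h⟩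
    · exact hmj'.trans (h.mono (Finset.subset_insert _ _))
    · exact h.mono (Finset.subset_insert _ _)
  · rw [reroot, hFf.parent_eq (Finset.mem_insert_self _ _),
      Finset.erase_insert fun h => hj.erase _ K h, Finset.insert_erase hjm]

end Reroot

section ForestMulKirchhoff

variable {a : Matrix (Fin n) (Fin n) ℝ}

open Classical in
/-- The bijection `(m, F) ↦ (parent F j, reroot F j m)` from the pairs where `i` lies in the tree
rooted at `m` to those where it lies in the tree rooted at `j`. -/
lemma sum_inTreeRootedAt_mul_eq (hnn : ∀ i j, 0 ≤ a i j) (i j : Fin n) :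
    ∑ x ∈ (Finset.univ.erase j) ×ˢ maxForests a,
      forestWeight a x.2 * (a x.1 j * if InTreeRootedAt x.2 x.1 i then 1 else 0) =
    ∑ x ∈ (Finset.univ.erase j) ×ˢ maxForests a,
      forestWeight a x.2 * (a j x.1 * if InTreeRootedAt x.2 j i then 1 else 0) := by
  have hsupp : ∀ {u v : Fin n} {F : Finset (Fin n × Fin n)} {r : Fin n},
      forestWeight a F * (a u v * if InTreeRootedAt F r i then 1 else 0) ≠ 0 →
        0 < a u v ∧ InTreeRootedAt F r i := by
    intro u v F r h
    exact ⟨(hnn u v).lt_of_ne fun h' => h (by simp [← h']),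
      by_contra fun h' => h (by simp [h'])⟩
  refine Finset.sum_bij_ne_zero (fun x _ _ => (parent x.2 j, reroot x.2 j x.1)) ?_ ?_ ?_ ?_
  · rintro ⟨m, F⟩ hx hne
    obtain ⟨hmj, hmi⟩ := hsupp hne
    obtain ⟨hm, hF⟩ := Finset.mem_product.mp hx
    have hmne := (Finset.mem_erase.mp hm).1
    exact Finset.mem_product.mpr ⟨Finset.mem_erase.mpr
      ⟨(isForest_of_mem_maxForests hF).ne_of_mem (parent_mem_of_isRoot hF hmi.1 hmj hmne),
        Finset.mem_univ _⟩, reroot_mem_maxForests hF hmi.1 hmj hmne⟩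
  · rintro ⟨m, F⟩ hx hne ⟨m', F'⟩ hx' hne' h
    obtain ⟨hmj, hmi⟩ := hsupp hne
    obtain ⟨hm'j, hm'i⟩ := hsupp hne'
    obtain ⟨hp, hG⟩ := Prod.mk.inj h
    obtain ⟨rfl, rfl⟩ := eq_of_reroot_eq (Finset.mem_product.mp hx).2 hmi.1 hmj
      (Finset.mem_erase.mp (Finset.mem_product.mp hx).1).1 (Finset.mem_product.mp hx').2 hm'i.1
      hm'j (Finset.mem_erase.mp (Finset.mem_product.mp hx').1).1 hp hG
    rfl
  · rintro ⟨K, G⟩ hx hne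
    obtain ⟨hjK, hji⟩ := hsupp hne
    obtain ⟨hK, hG⟩ := Finset.mem_product.mp hx
    obtain ⟨m, F, hF, hm, hmj, hmne, hmi, hpar, hre⟩ :=
      exists_reroot_eq hG hji.1 hjK (Finset.mem_erase.mp hK).1 hji.2
    refine ⟨(m, F),
      Finset.mem_product.mpr ⟨Finset.mem_erase.mpr ⟨hmne, Finset.mem_univ _⟩, hF⟩,
      ?_, by simp only [hpar, hre]⟩
    simp [hmj.ne', show InTreeRootedAt F m i from ⟨hm, hmi⟩, (forestWeight_pos hF).ne']
  · rintro ⟨m, F⟩ hx hne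
    obtain ⟨hmj, hmi⟩ := hsupp hne
    obtain ⟨hm, hF⟩ := Finset.mem_product.mp hx
    have hmne := (Finset.mem_erase.mp hm).1
    simp only [if_pos hmi, if_pos (inTreeRootedAt_reroot hF hmi.1 hmj hmne hmi.2)]
    linear_combination -(forestWeight_reroot_mul hF hmi.1 hmj hmne)

end ForestMulKirchhoff

section Matrices

variable {a : Matrix (Fin n) (Fin n) ℝ}

lemma kirchhoff_apply_self (a : Matrix (Fin n) (Fin n) ℝ) (i : Fin n) :
    kirchhoff a i i = ∑ k ∈ Finset.univ.erase i, a i k :=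
  if_pos rfl

lemma kirchhoff_apply_of_ne (a : Matrix (Fin n) (Fin n) ℝ) {i k : Fin n} (h : i ≠ k) :
    kirchhoff a i k = -a i k :=
  if_neg h

lemma kirchhoff_mulVec_apply (a : Matrix (Fin n) (Fin n) ℝ) (x : Fin n → ℝ) (i : Fin n) :
    (kirchhoff a).mulVec x i = ∑ k ∈ Finset.univ.erase i, a i k * (x i - x k) := by
  have hoff : ∑ k ∈ Finset.univ.erase i, kirchhoff a i k * x k =
      ∑ k ∈ Finset.univ.erase i, -(a i k * x k) := Finset.sum_congr rfl fun k hk => by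
    rw [kirchhoff_apply_of_ne a (Finset.ne_of_mem_erase hk).symm, neg_mul]
  rw [Matrix.mulVec, dotProduct, ← Finset.add_sum_erase _ _ (Finset.mem_univ i), hoff,
    kirchhoff_apply_self, Finset.sum_mul, Finset.sum_neg_distrib, ← sub_eq_add_neg,
    ← Finset.sum_sub_distrib]
  simp only [mul_sub]

lemma mul_kirchhoff_apply (a B : Matrix (Fin n) (Fin n) ℝ) (i j : Fin n) :
    (B * kirchhoff a) i j = ∑ m ∈ Finset.univ.erase j, (B i j * a j m - B i m * a m j) := by
  have hoff : ∑ m ∈ Finset.univ.erase j, B i m * kirchhoff a m j =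
      ∑ m ∈ Finset.univ.erase j, -(B i m * a m j) := Finset.sum_congr rfl fun m hm => by
    rw [kirchhoff_apply_of_ne a (Finset.ne_of_mem_erase hm), mul_neg]
  rw [Matrix.mul_apply, ← Finset.add_sum_erase _ _ (Finset.mem_univ j), hoff,
    kirchhoff_apply_self, Finset.mul_sum, Finset.sum_neg_distrib, ← sub_eq_add_neg,
    ← Finset.sum_sub_distrib]

open Classical in
noncomputable def forestMatrix (a : Matrix (Fin n) (Fin n) ℝ) : Matrix (Fin n) (Fin n) ℝ :=
  Matrix.of fun i j =>
    ∑ F ∈ (maxForests a).filter (fun F => InTreeRootedAt F j i), forestWeight a F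

lemma barJ_eq_smul (a : Matrix (Fin n) (Fin n) ℝ) :
    barJ a = (∑ F ∈ maxForests a, forestWeight a F)⁻¹ • forestMatrix a := by
  ext i j
  simp [barJ, forestMatrix, div_eq_inv_mul]

open Classical in
lemma forestMatrix_apply (i j : Fin n) :
    forestMatrix a i j =
      ∑ F ∈ maxForests a, forestWeight a F * if InTreeRootedAt F j i then 1 else 0 := by
  simp [forestMatrix, Finset.sum_filter]

lemma kirchhoff_mul_forestMatrix (hnn : ∀ i j, 0 ≤ a i j) :
    kirchhoff a * forestMatrix a = 0 := by
  classical
  ext i j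
  rw [Matrix.zero_apply, ← sum_mul_sub_inTreeRootedAt_eq_zero hnn i j, Finset.sum_product]
  refine (kirchhoff_mulVec_apply a (fun k => forestMatrix a k j) i).trans
    (Finset.sum_congr rfl fun k _ => ?_)
  simp only [forestMatrix_apply, ← Finset.sum_sub_distrib, Finset.mul_sum]
  exact Finset.sum_congr rfl fun F _ => by ring

lemma forestMatrix_mul_kirchhoff (hnn : ∀ i j, 0 ≤ a i j) :
    forestMatrix a * kirchhoff a = 0 := by
  classical
  ext i j
  rw [Matrix.zero_apply, mul_kirchhoff_apply,
    ← sub_eq_zero_of_eq (sum_inTreeRootedAt_mul_eq hnn i j).symm, Finset.sum_product,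
    Finset.sum_product, ← Finset.sum_sub_distrib]
  refine Finset.sum_congr rfl fun m _ => ?_
  simp only [forestMatrix_apply, Finset.sum_mul, ← Finset.sum_sub_distrib]
  exact Finset.sum_congr rfl fun F _ => by ring

lemma kirchhoff_mul_barJ (hnn : ∀ i j, 0 ≤ a i j) : kirchhoff a * barJ a = 0 := by
  rw [barJ_eq_smul, Matrix.mul_smul, kirchhoff_mul_forestMatrix hnn, smul_zero]

lemma barJ_mul_kirchhoff (hnn : ∀ i j, 0 ≤ a i j) : barJ a * kirchhoff a = 0 := by
  rw [barJ_eq_smul, Matrix.smul_mul, forestMatrix_mul_kirchhoff hnn, smul_zero]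

end Matrices

section Kernel

variable {a : Matrix (Fin n) (Fin n) ℝ} {S : Set (Fin n)} {x : Fin n → ℝ} {u v w : Fin n}

lemma sum_barJ_apply (a : Matrix (Fin n) (Fin n) ℝ) (i : Fin n) : ∑ j, barJ a i j = 1 := by
  classical
  have hrow : ∀ F ∈ maxForests a,
      ∑ j, forestWeight a F * (if InTreeRootedAt F j i then 1 else 0) = forestWeight a F := by
    intro F hF
    obtain ⟨r, hr, -⟩ := (isForest_of_mem_maxForests hF).existsUnique_inTreeRootedAt i
    simp [(isForest_of_mem_maxForests hF).inTreeRootedAt_iff hr]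
  simp only [barJ_eq_smul, Matrix.smul_apply, smul_eq_mul, ← Finset.mul_sum, forestMatrix_apply]
  rw [Finset.sum_comm, Finset.sum_congr rfl hrow,
    inv_mul_cancel₀ (sum_forestWeight_maxForests_pos a).ne']

lemma reach_of_barJ_apply_ne_zero {i j : Fin n} (h : barJ a i j ≠ 0) : Reach a j i := by
  classical
  obtain ⟨F, hF, hji⟩ : ∃ F ∈ maxForests a, InTreeRootedAt F j i := by
    by_contra! hnone
    exact h (by simp [barJ, Finset.filter_false_of_mem hnone])
  exact ReflTransGen.mono (fun _ _ huv => pos_of_mem_maxForests hF huv) _ _ hji.2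

lemma mem_of_reach_of_mem_basisClasses (hS : S ∈ basisClasses a) (h : Reach a u v)
    (hv : v ∈ S) : u ∈ S := by
  induction h using ReflTransGen.head_induction_on with
  | refl => exact hv
  | head hstep _ ih => exact by_contra fun h => hS.2 _ _ h ih hstep

/-- `(L x) v = ∑ k, a v k * (x v - x k)` is a sum of nonnegative terms. -/
lemma eq_of_kirchhoff_mulVec_eq_zero (hnn : ∀ i j, 0 ≤ a i j) (hx : (kirchhoff a).mulVec x = 0)
    (hle : ∀ k, 0 < a v k → x k ≤ x v) (hvu : 0 < a v u) : x u = x v := by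
  have hsum := kirchhoff_mulVec_apply a x v
  rw [hx, Pi.zero_apply, eq_comm] at hsum
  have hterm : ∀ k ∈ Finset.univ.erase v, 0 ≤ a v k * (x v - x k) := fun k _ =>
    (hnn v k).eq_or_lt.elim (fun h => by simp [← h])
      fun h => mul_nonneg h.le (sub_nonneg.mpr (hle k h))
  by_cases huv : u = v
  · exact huv ▸ rfl
  have := (Finset.sum_eq_zero_iff_of_nonneg hterm).mp hsum u (by simp [huv])
  rcases mul_eq_zero.mp this with h | h
  · exact absurd h hvu.ne'
  · linarith

lemma eq_of_reach_of_le (hnn : ∀ i j, 0 ≤ a i j) (hx : (kirchhoff a).mulVec x = 0)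
    (hmax : ∀ k, Reach a k v → x k ≤ x v) (h : Reach a u v) : x u = x v := by
  induction h using ReflTransGen.head_induction_on with
  | refl => rfl
  | @head u z hstep hzv ih =>
    refine (eq_of_kirchhoff_mulVec_eq_zero hnn hx (fun k hk => ?_) hstep).trans ih
    exact ih ▸ hmax k (ReflTransGen.head hk hzv)

lemma eq_of_mem_basisClasses (hnn : ∀ i j, 0 ≤ a i j) (hx : (kirchhoff a).mulVec x = 0)
    (hS : S ∈ basisClasses a) (hu : u ∈ S) (hw : w ∈ S) : x u = x w := by
  classical
  obtain ⟨v, hvS, hmax⟩ :=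
    Finset.exists_max_image (Finset.univ.filter (· ∈ S)) x ⟨u, by simp [hu]⟩
  obtain ⟨v₀, rfl⟩ := hS.1
  have hvS : v ∈ strongClass a v₀ := by simpa using hvS
  have hreach : ∀ {z}, z ∈ strongClass a v₀ → x z = x v := fun hz =>
    eq_of_reach_of_le hnn hx
      (fun k hk => hmax k (by simpa using mem_of_reach_of_mem_basisClasses hS hk hvS))
      (hz.1.trans hvS.2)
  rw [hreach hu, hreach hw]

/-- A vertex `v` reached from `i` by the fewest vertices spans a basis bicomponent. -/
lemma exists_mem_basisClasses_reach (a : Matrix (Fin n) (Fin n) ℝ) (i : Fin n) :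
    ∃ S ∈ basisClasses a, ∃ v ∈ S, Reach a v i := by
  classical
  let reachers (v : Fin n) : Finset (Fin n) := Finset.univ.filter (Reach a · v)
  obtain ⟨v, hvi, hmin⟩ := Finset.exists_min_image ((Finset.univ.filter (Reach a · i)))
    (fun v => (reachers v).card) ⟨i, Finset.mem_filter.mpr ⟨Finset.mem_univ _, .refl⟩⟩
  simp only [Finset.mem_filter, Finset.mem_univ, true_and] at hvi hmin
  refine ⟨strongClass a v, ⟨⟨v, rfl⟩, fun u w hu hw huw => ?_⟩, v, ⟨.refl, .refl⟩,
    hvi⟩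
  have huv : Reach a u v := ReflTransGen.head huw hw.1
  have hlt : (reachers u).card < (reachers v).card := by
    refine Finset.card_lt_card ⟨fun z hz => ?_, fun hsub => hu ⟨huv, ?_⟩⟩
    · simp only [reachers, Finset.mem_filter, Finset.mem_univ, true_and] at hz ⊢
      exact hz.trans huv
    · simpa [reachers] using hsub (Finset.mem_filter.mpr ⟨Finset.mem_univ _, .refl⟩)
  exact (hmin u (huv.trans hvi)).not_gt hlt

lemma le_zero_of_forall_mem_basisClasses (hnn : ∀ i j, 0 ≤ a i j)
    (hx : (kirchhoff a).mulVec x = 0) (h0 : ∀ S ∈ basisClasses a, ∀ v ∈ S, x v = 0)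
    (i : Fin n) : x i ≤ 0 := by
  obtain ⟨i₀, -, hmax⟩ := Finset.exists_max_image Finset.univ x ⟨i, Finset.mem_univ i⟩
  obtain ⟨S, hS, v, hv, hvi₀⟩ := exists_mem_basisClasses_reach a i₀
  have := eq_of_reach_of_le hnn hx (fun k _ => hmax k (Finset.mem_univ k)) hvi₀
  linarith [hmax i (Finset.mem_univ i), h0 S hS v hv]

lemma eq_zero_of_forall_mem_basisClasses (hnn : ∀ i j, 0 ≤ a i j)
    (hx : (kirchhoff a).mulVec x = 0) (h0 : ∀ S ∈ basisClasses a, ∀ v ∈ S, x v = 0) :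
    x = 0 := by
  funext i
  have hneg := le_zero_of_forall_mem_basisClasses (x := -x) hnn
    (by rw [Matrix.mulVec_neg, hx, neg_zero]) (fun S hS v hv => by simp [h0 S hS v hv]) i
  exact le_antisymm (le_zero_of_forall_mem_basisClasses hnn hx h0 i) (by simpa using hneg)

lemma barJ_mulVec_of_kirchhoff_mulVec_eq_zero (hnn : ∀ i j, 0 ≤ a i j)
    (hx : (kirchhoff a).mulVec x = 0) : (barJ a).mulVec x = x := by
  refine sub_eq_zero.mp (eq_zero_of_forall_mem_basisClasses hnn ?_ fun S hS v hv => ?_)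
  · rw [Matrix.mulVec_sub, Matrix.mulVec_mulVec, kirchhoff_mul_barJ hnn, Matrix.zero_mulVec, hx,
      sub_zero]
  · have hrow : ∀ j, barJ a v j * x j = barJ a v j * x v := fun j => by
      by_cases hj : barJ a v j = 0
      · simp [hj]
      · rw [eq_of_mem_basisClasses hnn hx hS
          (mem_of_reach_of_mem_basisClasses hS (reach_of_barJ_apply_ne_zero hj) hv) hv]
    rw [Pi.sub_apply, Matrix.mulVec, dotProduct, Finset.sum_congr rfl fun j _ => hrow j,
      ← Finset.sum_mul, sum_barJ_apply, one_mul, sub_self]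

end Kernel

/-- The normalized matrix of maximum out-forests is the eigenprojection of the
Kirchhoff matrix at eigenvalue `0`: it is idempotent, its range is the kernel
of `L` and its kernel is the range of `L`. -/
theorem barJ_eigenprojection {n : ℕ} (a : Matrix (Fin n) (Fin n) ℝ)
    (hnn : ∀ i j, 0 ≤ a i j) :
    barJ a * barJ a = barJ a ∧
      LinearMap.range (barJ a).mulVecLin = LinearMap.ker (kirchhoff a).mulVecLin ∧
      LinearMap.ker (barJ a).mulVecLin = LinearMap.range (kirchhoff a).mulVecLin :=
  Matrix.mul_self_eq_and_range_eq_ker_and_ker_eq_range (kirchhoff_mul_barJ hnn)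
    (barJ_mul_kirchhoff hnn) fun _ => barJ_mulVec_of_kirchhoff_mulVec_eq_zero hnn
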